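/- arXiv:2106.11088 — 2 statements merged into one kernel-verified Lean document; each statement's English description precedes it below -/
import Mathlib

section
/- Let θ₁, θ₂ > 0 with θ₁ + θ₂ < π, let n ≥ 1, let δ > 0, let x, x' ∈ (−θ₁, θ₁) with |x − x'| ≤ δ, and let y₁, …, y_n ∈ (π − θ₂, π + θ₂). Then the vector in ℝⁿ whose l-th entry is (cos(x' − y_l) − cos(x − y_l)) / ((1 − cos(x − y_l)) · (1 − cos(x' − y_l))) has Euclidean norm at most √n · δ / (1 + cos(θ₁ + θ₂))². In particular, if δ = 2π/n, the norm is at most 2π / (√n · (1 + cos(θ₁ + θ₂))²). -/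
/-!
Each denominator factor `1 - cos (z - y) = 1 + cos (z - y + π)` has `|z - y + π| < θ₁ + θ₂ < π`,
so it is at least `c = 1 + cos (θ₁ + θ₂) > 0`, while the numerator is at most `|x - x'| ≤ δ`
because `cos` is 1-Lipschitz. Every entry is therefore at most `δ / c²` in absolute value, and a
vector of `n` such entries has Euclidean norm at most `√n · δ / c²`.
-/

open Real

lemma one_add_cos_pos {s : ℝ} (hs₀ : 0 ≤ s) (hs : s < π) : 0 < 1 + cos s := by
  have := cos_lt_cos_of_nonneg_of_le_pi hs₀ le_rfl hs
  rw [cos_pi] at this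
  linarith

lemma cos_le_cos_of_abs_le {s t : ℝ} (hts : |t| ≤ s) (hs : s ≤ π) : cos s ≤ cos t := by
  rw [← cos_abs t]
  exact cos_le_cos_of_nonneg_of_le_pi (abs_nonneg t) hs hts

section Denominator

variable {θ₁ θ₂ z w : ℝ} (hz : z ∈ Set.Ioo (-θ₁) θ₁) (hw : w ∈ Set.Ioo (π - θ₂) (π + θ₂))
include hz hw

lemma abs_sub_add_pi_lt : |z - w + π| < θ₁ + θ₂ := by
  rw [abs_lt]
  constructor <;> linarith [hz.1, hz.2, hw.1, hw.2]

lemma one_add_cos_add_pos (hsum : θ₁ + θ₂ < π) : 0 < 1 + cos (θ₁ + θ₂) :=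
  one_add_cos_pos ((abs_nonneg _).trans (abs_sub_add_pi_lt hz hw).le) hsum

lemma one_add_cos_add_le_one_sub_cos_sub (hsum : θ₁ + θ₂ < π) :
    1 + cos (θ₁ + θ₂) ≤ 1 - cos (z - w) := by
  have := cos_le_cos_of_abs_le (abs_sub_add_pi_lt hz hw).le hsum.le
  rw [cos_add_pi] at this
  linarith

end Denominator

lemma abs_div_mul_le {a δ c d₁ d₂ : ℝ} (ha : |a| ≤ δ) (hc : 0 < c) (hd₁ : c ≤ d₁)
    (hd₂ : c ≤ d₂) : |a / (d₁ * d₂)| ≤ δ / c ^ 2 := by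
  rw [abs_div, abs_of_pos (mul_pos (hc.trans_le hd₁) (hc.trans_le hd₂)), sq]
  exact div_le_div₀ ((abs_nonneg a).trans ha) ha (by positivity)
    (mul_le_mul hd₁ hd₂ hc.le (hc.trans_le hd₁).le)

lemma sqrt_sum_sq_le_sqrt_card_mul {ι : Type*} [Fintype ι] {f : ι → ℝ} {M : ℝ} (hM : 0 ≤ M)
    (hf : ∀ i, |f i| ≤ M) : √(∑ i, f i ^ 2) ≤ √(Fintype.card ι) * M := by
  have hsum : ∑ i, f i ^ 2 ≤ Fintype.card ι * M ^ 2 := by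
    calc ∑ i, f i ^ 2 ≤ ∑ _i : ι, M ^ 2 :=
          Finset.sum_le_sum fun i _ => sq_le_sq' (abs_le.mp (hf i)).1 (abs_le.mp (hf i)).2
      _ = Fintype.card ι * M ^ 2 := by simp
  calc √(∑ i, f i ^ 2) ≤ √(Fintype.card ι * M ^ 2) := sqrt_le_sqrt hsum
    _ = √(Fintype.card ι) * M := by rw [sqrt_mul (Nat.cast_nonneg _), sqrt_sq hM]

lemma sqrt_mul_div_self (x a : ℝ) : √x * (a / x) = a / √x := by
  rw [mul_div_left_comm, sqrt_div_self', mul_one_div]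

theorem row_difference_norm_bound_general (θ₁ θ₂ : ℝ)
    (hsum : θ₁ + θ₂ < Real.pi)
    (n : ℕ) (δ : ℝ)
    (x x' : ℝ) (hx : x ∈ Set.Ioo (-θ₁) θ₁) (hx' : x' ∈ Set.Ioo (-θ₁) θ₁)
    (hxx' : |x - x'| ≤ δ)
    (y : Fin n → ℝ) (hy : ∀ l, y l ∈ Set.Ioo (Real.pi - θ₂) (Real.pi + θ₂)) :
    Real.sqrt (∑ l : Fin n,
        ((Real.cos (x' - y l) - Real.cos (x - y l)) /
          ((1 - Real.cos (x - y l)) * (1 - Real.cos (x' - y l)))) ^ 2) ≤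
      Real.sqrt n * δ / (1 + Real.cos (θ₁ + θ₂)) ^ 2 ∧
    (δ = 2 * Real.pi / n →
      Real.sqrt (∑ l : Fin n,
          ((Real.cos (x' - y l) - Real.cos (x - y l)) /
            ((1 - Real.cos (x - y l)) * (1 - Real.cos (x' - y l)))) ^ 2) ≤
        2 * Real.pi / (Real.sqrt n * (1 + Real.cos (θ₁ + θ₂)) ^ 2)) := by
  have hentry : ∀ l, |(cos (x' - y l) - cos (x - y l)) /
      ((1 - cos (x - y l)) * (1 - cos (x' - y l)))| ≤ δ / (1 + cos (θ₁ + θ₂)) ^ 2 := by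
    intro l
    refine abs_div_mul_le ?_ (one_add_cos_add_pos hx (hy l) hsum)
      (one_add_cos_add_le_one_sub_cos_sub hx (hy l) hsum)
      (one_add_cos_add_le_one_sub_cos_sub hx' (hy l) hsum)
    calc |cos (x' - y l) - cos (x - y l)| ≤ |x' - y l - (x - y l)| := abs_cos_sub_cos_le _ _
      _ = |x - x'| := by rw [abs_sub_comm]; ring_nf
      _ ≤ δ := hxx'
  have hbound := sqrt_sum_sq_le_sqrt_card_mul
    (div_nonneg ((abs_nonneg _).trans hxx') (sq_nonneg _)) hentry
  rw [Fintype.card_fin, ← mul_div_assoc] at hbound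
  refine ⟨hbound, fun hδ₀ => hbound.trans_eq ?_⟩
  rw [hδ₀, sqrt_mul_div_self, div_div]

/-- bound on the Euclidean norm of the row-difference vector appearing in the
determinant estimate, together with the particular case `δ = 2π/n`. -/
theorem row_difference_norm_bound (θ₁ θ₂ : ℝ) (hθ₁ : 0 < θ₁) (hθ₂ : 0 < θ₂)
    (hsum : θ₁ + θ₂ < Real.pi)
    (n : ℕ) (hn : 1 ≤ n) (δ : ℝ) (hδ : 0 < δ)
    (x x' : ℝ) (hx : x ∈ Set.Ioo (-θ₁) θ₁) (hx' : x' ∈ Set.Ioo (-θ₁) θ₁)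
    (hxx' : |x - x'| ≤ δ)
    (y : Fin n → ℝ) (hy : ∀ l, y l ∈ Set.Ioo (Real.pi - θ₂) (Real.pi + θ₂)) :
    Real.sqrt (∑ l : Fin n,
        ((Real.cos (x' - y l) - Real.cos (x - y l)) /
          ((1 - Real.cos (x - y l)) * (1 - Real.cos (x' - y l)))) ^ 2) ≤
      Real.sqrt n * δ / (1 + Real.cos (θ₁ + θ₂)) ^ 2 ∧
    (δ = 2 * Real.pi / n →
      Real.sqrt (∑ l : Fin n,
          ((Real.cos (x' - y l) - Real.cos (x - y l)) /
            ((1 - Real.cos (x - y l)) * (1 - Real.cos (x' - y l)))) ^ 2) ≤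
        2 * Real.pi / (Real.sqrt n * (1 + Real.cos (θ₁ + θ₂)) ^ 2)) :=
  row_difference_norm_bound_general θ₁ θ₂ hsum n δ x x' hx hx' hxx' y hy
end

section
/- Let θ₁, θ₂ > 0 with θ₁ + θ₂ < π. There exists a constant c = c(θ₁, θ₂) > 0 such that for every integer n ≥ 1 and all points x₁, …, x_n ∈ (−θ₁, θ₁) and y₁, …, y_n ∈ (π − θ₂, π + θ₂), the n×n determinant satisfies |det[ 1 / (1 − cos(x_j − y_l)) ]_{1 ≤ j,l ≤ n}| ≤ cⁿ · (n!)^{−1/2}. In particular, this determinant tends to 0 super-exponentially fast as n → ∞, uniformly over all such configurations of points. -/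
/-!
Put `u = tan (x / 2)` and `w = tan ((π - y) / 2)`. Then
`1 / (1 - cos (x - y)) = (2 cos² (x / 2))⁻¹ (cos² ((π - y) / 2))⁻¹ (1 - u w)⁻²`, where
`|u| ≤ tan (θ₁ / 2)`, `|w| ≤ tan (θ₂ / 2)` and `tan (θ₁ / 2) tan (θ₂ / 2) = s² < 1` because
`θ₁ + θ₂ < π`. Expanding `(1 - u w)⁻² = ∑ (k + 1) (u w)ᵏ` in every row writes
`det [(1 - u_j w_l)⁻²]` as a sum over maps `κ` from rows to exponents of
`∏ (κ j + 1) u_j ^ κ j · det [w_l ^ κ j]`. Only injective `κ` contribute, and for those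
`∑ κ j ≥ n (n - 1) / 2`: half of the decay `s ^ (2 κ j)` pays for the sum over `κ`, the other
half gives `|det| ≤ n! s ^ (n (n - 1) / 2) (1 - s)⁻²ⁿ`. The Gaussian factor
`s ^ (n (n - 1) / 2)` beats `(n!)^{3/2} Cⁿ`.
-/

open Finset Matrix Filter Topology
open scoped Nat

namespace Matrix

variable {m n R : Type*} [Fintype n] [DecidableEq n]

theorem det_mul_eq_sum_prod_mul_det_submatrix [Fintype m] [CommRing R]
    (A : Matrix n m R) (B : Matrix m n R) :
    (A * B).det = ∑ κ : n → m, (∏ i, A i (κ i)) * (B.submatrix κ id).det := by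
  have hrows : A * B = fun i => ∑ k, A i k • B k := by
    ext i j
    simp [Matrix.mul_apply, Finset.sum_apply]
  rw [hrows]
  exact (detRowAlternating.toMultilinearMap.map_sum _).trans
    (sum_congr rfl fun κ _ => MultilinearMap.map_smul_univ _ _ _)

theorem abs_det_le_factorial_mul_prod [CommRing R] [LinearOrder R] [IsStrictOrderedRing R]
    (A : Matrix n n R) {ρ : n → R} (hρ : ∀ i j, |A i j| ≤ ρ i) :
    |A.det| ≤ (Fintype.card n)! * ∏ i, ρ i := by
  rw [det_apply']
  calc |∑ σ : Equiv.Perm n, (Equiv.Perm.sign σ : R) * ∏ i, A (σ i) i|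
      ≤ ∑ σ : Equiv.Perm n, |(Equiv.Perm.sign σ : R) * ∏ i, A (σ i) i| := abs_sum_le_sum_abs _ _
    _ ≤ ∑ _σ : Equiv.Perm n, ∏ i, ρ i := by
      gcongr with σ
      rw [abs_mul, abs_unit_intCast, one_mul, abs_prod, ← Equiv.prod_comp σ ρ]
      exact prod_le_prod (fun i _ => abs_nonneg _) fun i _ => hρ _ _
    _ = _ := by simp [Fintype.card_perm]

theorem abs_det_of_mul_mul_le [CommRing R] [LinearOrder R] [IsStrictOrderedRing R]
    {p q : n → R} {P Q : R} (hp : ∀ i, |p i| ≤ P) (hq : ∀ j, |q j| ≤ Q) (A : Matrix n n R) :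
    |(of fun i j => p i * q j * A i j).det| ≤
      P ^ Fintype.card n * Q ^ Fintype.card n * |A.det| := by
  have hprod {v : n → R} {V : R} (hv : ∀ i, |v i| ≤ V) : |∏ i, v i| ≤ V ^ Fintype.card n := by
    rw [abs_prod, ← card_univ, ← prod_const]
    exact prod_le_prod (fun i _ => abs_nonneg _) fun i _ => hv i
  have hdet : (of fun i j => p i * q j * A i j).det = (∏ i, p i) * ((∏ j, q j) * A.det) := by
    rw [← det_mul_row, ← det_mul_column]
    congr 1
    ext i j
    simp [mul_assoc]
  rw [hdet, abs_mul, abs_mul, ← mul_assoc]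
  have hP := hprod hp
  gcongr
  · exact (abs_nonneg _).trans hP
  · exact hprod hq

end Matrix

theorem Finset.sum_range_id_le_sum_of_injective {n : ℕ} {κ : Fin n → ℕ}
    (hκ : Function.Injective κ) : ∑ i ∈ range n, i ≤ ∑ j, κ j := by
  have hcast : Function.Injective fun j => (κ j : ℤ) := Nat.cast_injective.comp hκ
  have h := Finset.sum_range_le_sum (s := univ.image fun j => (κ j : ℤ)) (c := 0) (by simp)
  rw [card_image_of_injective _ hcast, sum_image fun _ _ _ _ h => hcast h] at h
  simp only [zero_add, card_univ, Fintype.card_fin] at h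
  zify
  exact h

theorem hasSum_succ_mul_geometric {z : ℝ} (hz : |z| < 1) :
    HasSum (fun k : ℕ => ((k : ℝ) + 1) * z ^ k) (1 / (1 - z) ^ 2) := by
  simpa using hasSum_choose_mul_geometric_of_norm_lt_one 1 (r := z) hz

section InverseSquareKernel

variable {n : ℕ} {u w : Fin n → ℝ} {U W s : ℝ}

theorem abs_prod_mul_det_pow_le (hu : ∀ j, |u j| ≤ U) (hw : ∀ l, |w l| ≤ W)
    (hUW : U * W ≤ s ^ 2) (hs₀ : 0 ≤ s) (hs₁ : s ≤ 1) (κ : Fin n → ℕ) :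
    |∏ j, ((κ j : ℝ) + 1) * u j ^ κ j| * |(of fun j l => w l ^ κ j).det| ≤
      n ! * s ^ (∑ i ∈ range n, i) * ∏ j, ((κ j : ℝ) + 1) * s ^ κ j := by
  by_cases hκ : Function.Injective κ
  · have hdet : |(of fun j l => w l ^ κ j).det| ≤ n ! * ∏ j, W ^ κ j := by
      simpa using abs_det_le_factorial_mul_prod (of fun j l => w l ^ κ j) fun j l => by
        rw [of_apply, abs_pow]
        exact pow_le_pow_left₀ (abs_nonneg _) (hw l) (κ j)
    have hrow (j : Fin n) :
        |((κ j : ℝ) + 1) * u j ^ κ j| * W ^ κ j ≤ ((κ j : ℝ) + 1) * s ^ κ j * s ^ κ j := by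
      have hU : 0 ≤ U := (abs_nonneg _).trans (hu j)
      have hW : 0 ≤ W := (abs_nonneg _).trans (hw j)
      calc |((κ j : ℝ) + 1) * u j ^ κ j| * W ^ κ j
          = ((κ j : ℝ) + 1) * (|u j| ^ κ j * W ^ κ j) := by
            rw [abs_mul, abs_pow, abs_of_nonneg (by positivity : (0 : ℝ) ≤ κ j + 1)]; ring
        _ ≤ ((κ j : ℝ) + 1) * (U * W) ^ κ j := by
            rw [mul_pow]; gcongr; exact hu j
        _ ≤ ((κ j : ℝ) + 1) * (s ^ 2) ^ κ j := by gcongr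
        _ = ((κ j : ℝ) + 1) * s ^ κ j * s ^ κ j := by ring
    calc |∏ j, ((κ j : ℝ) + 1) * u j ^ κ j| * |(of fun j l => w l ^ κ j).det|
        ≤ |∏ j, ((κ j : ℝ) + 1) * u j ^ κ j| * (n ! * ∏ j, W ^ κ j) := by gcongr
      _ = n ! * ∏ j, |((κ j : ℝ) + 1) * u j ^ κ j| * W ^ κ j := by
          rw [abs_prod, prod_mul_distrib]; ring
      _ ≤ n ! * ∏ j, ((κ j : ℝ) + 1) * s ^ κ j * s ^ κ j := by
          refine mul_le_mul_of_nonneg_left (prod_le_prod (fun j _ => ?_) fun j _ => hrow j)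
            (by positivity)
          exact mul_nonneg (abs_nonneg _) (pow_nonneg ((abs_nonneg _).trans (hw j)) _)
      _ = n ! * s ^ (∑ j, κ j) * ∏ j, ((κ j : ℝ) + 1) * s ^ κ j := by
          rw [prod_mul_distrib, prod_pow_eq_pow_sum]; ring
      _ ≤ n ! * s ^ (∑ i ∈ range n, i) * ∏ j, ((κ j : ℝ) + 1) * s ^ κ j := by
          refine mul_le_mul_of_nonneg_right (mul_le_mul_of_nonneg_left ?_ (by positivity))
            (prod_nonneg fun j _ => by positivity)
          exact pow_le_pow_of_le_one hs₀ hs₁ (sum_range_id_le_sum_of_injective hκ)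
  · obtain ⟨i, j, hij, hne⟩ := Function.not_injective_iff.1 hκ
    rw [det_zero_of_row_eq hne (by ext l; simp [hij]), abs_zero, mul_zero]
    exact mul_nonneg (by positivity) (prod_nonneg fun j _ => by positivity)

theorem abs_det_sum_succ_mul_pow_le (hu : ∀ j, |u j| ≤ U) (hw : ∀ l, |w l| ≤ W)
    (hUW : U * W ≤ s ^ 2) (hs₀ : 0 ≤ s) (hs₁ : s < 1) (m : ℕ) :
    |(of fun j l => ∑ k ∈ range m, ((k : ℝ) + 1) * (u j * w l) ^ k).det| ≤
      n ! * s ^ (∑ i ∈ range n, i) * (1 / (1 - s) ^ 2) ^ n := by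
  set A : Matrix (Fin n) (Fin m) ℝ := of fun j k => ((k : ℝ) + 1) * u j ^ (k : ℕ)
  set B : Matrix (Fin m) (Fin n) ℝ := of fun k l => w l ^ (k : ℕ)
  have hAB : (of fun j l => ∑ k ∈ range m, ((k : ℝ) + 1) * (u j * w l) ^ k) = A * B := by
    ext j l
    rw [mul_apply, of_apply, ← Fin.sum_univ_eq_sum_range]
    simp [A, B, mul_pow, mul_assoc]
  have hgeom : ∑ k : Fin m, ((k : ℝ) + 1) * s ^ (k : ℕ) ≤ 1 / (1 - s) ^ 2 := by
    rw [Fin.sum_univ_eq_sum_range (fun k => ((k : ℝ) + 1) * s ^ k)]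
    exact sum_le_hasSum (f := fun k : ℕ => ((k : ℝ) + 1) * s ^ k) _ (fun k _ => by positivity)
      (hasSum_succ_mul_geometric (by rwa [abs_of_nonneg hs₀]))
  rw [hAB, det_mul_eq_sum_prod_mul_det_submatrix]
  calc |∑ κ : Fin n → Fin m, (∏ j, A j (κ j)) * (B.submatrix κ id).det|
      ≤ ∑ κ : Fin n → Fin m, |∏ j, A j (κ j)| * |(B.submatrix κ id).det| :=
        (abs_sum_le_sum_abs _ _).trans_eq (by simp only [abs_mul])
    _ ≤ ∑ κ : Fin n → Fin m,
          n ! * s ^ (∑ i ∈ range n, i) * ∏ j, (((κ j : ℕ) : ℝ) + 1) * s ^ (κ j : ℕ) :=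
        sum_le_sum fun κ _ => abs_prod_mul_det_pow_le hu hw hUW hs₀ hs₁.le (fun j => κ j)
    _ = n ! * s ^ (∑ i ∈ range n, i) * (∑ k : Fin m, ((k : ℝ) + 1) * s ^ (k : ℕ)) ^ n := by
        rw [← mul_sum, Fintype.sum_pow]
    _ ≤ n ! * s ^ (∑ i ∈ range n, i) * (1 / (1 - s) ^ 2) ^ n := by
        gcongr

theorem abs_det_one_div_one_sub_mul_sq_le (hu : ∀ j, |u j| ≤ U) (hw : ∀ l, |w l| ≤ W)
    (hUW : U * W ≤ s ^ 2) (hs₀ : 0 ≤ s) (hs₁ : s < 1) :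
    |(of fun j l => 1 / (1 - u j * w l) ^ 2).det| ≤
      n ! * s ^ (∑ i ∈ range n, i) * (1 / (1 - s) ^ 2) ^ n := by
  refine le_of_tendsto' (x := atTop) ?_ (abs_det_sum_succ_mul_pow_le hu hw hUW hs₀ hs₁)
  refine ((continuous_abs.comp (continuous_id.matrix_det)).tendsto _).comp ?_
  refine tendsto_pi_nhds.2 fun j => tendsto_pi_nhds.2 fun l => ?_
  refine (hasSum_succ_mul_geometric ?_).tendsto_sum_nat
  have hU : 0 ≤ U := (abs_nonneg _).trans (hu j)
  calc |u j * w l| ≤ U * W := by rw [abs_mul]; gcongr <;> simp [hu, hw]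
    _ ≤ s ^ 2 := hUW
    _ < 1 := by nlinarith

end InverseSquareKernel

theorem exists_pos_factorial_sq_mul_pow_le {C s : ℝ} (hC : 0 ≤ C) (hs₀ : 0 ≤ s) (hs₁ : s < 1) :
    ∃ c > 0, ∀ n : ℕ, (n ! : ℝ) ^ 2 * C ^ n * s ^ (∑ i ∈ range n, i) ≤ c ^ n := by
  have hlim : Tendsto (fun i : ℕ => ((i : ℝ) + 1) ^ 2 * C * s ^ i) atTop (𝓝 0) := by
    have h := (((tendsto_pow_const_mul_const_pow_of_lt_one 2 hs₀ hs₁).add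
      ((tendsto_pow_const_mul_const_pow_of_lt_one 1 hs₀ hs₁).const_mul 2)).add
      (tendsto_pow_atTop_nhds_zero_of_lt_one hs₀ hs₁)).mul_const C
    simp only [mul_zero, add_zero, zero_mul] at h
    exact h.congr fun i => by ring
  obtain ⟨K, hK⟩ := hlim.bddAbove_range
  refine ⟨max K 1, by positivity, fun n => ?_⟩
  calc (n ! : ℝ) ^ 2 * C ^ n * s ^ (∑ i ∈ range n, i)
      = ∏ i ∈ range n, ((i : ℝ) + 1) ^ 2 * C * s ^ i := by
        rw [prod_mul_distrib, prod_mul_distrib, prod_pow_eq_pow_sum, prod_const, card_range,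
          prod_pow, ← prod_range_add_one_eq_factorial]
        push_cast
        rfl
    _ ≤ ∏ _i ∈ range n, max K 1 :=
        prod_le_prod (fun i _ => by positivity) fun i _ => (hK ⟨i, rfl⟩).trans (le_max_left _ _)
    _ = max K 1 ^ n := by rw [prod_const, card_range]

namespace Real

theorem one_add_cos_add_eq {a b : ℝ} (ha : cos (a / 2) ≠ 0) (hb : cos (b / 2) ≠ 0) :
    1 + cos (a + b) =
      2 * cos (a / 2) ^ 2 * cos (b / 2) ^ 2 * (1 - tan (a / 2) * tan (b / 2)) ^ 2 := by
  have hab : cos (a + b) = 2 * cos (a / 2 + b / 2) ^ 2 - 1 := by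
    rw [← cos_two_mul]; ring_nf
  rw [hab, cos_add, tan_eq_sin_div_cos, tan_eq_sin_div_cos]
  field_simp
  ring

theorem one_div_one_sub_cos_sub_eq {x y : ℝ} (hx : cos (x / 2) ≠ 0) (hy : cos ((π - y) / 2) ≠ 0) :
    1 / (1 - cos (x - y)) = (2 * cos (x / 2) ^ 2)⁻¹ * (cos ((π - y) / 2) ^ 2)⁻¹ *
      (1 / (1 - tan (x / 2) * tan ((π - y) / 2)) ^ 2) := by
  rw [show x - y = x + (π - y) - π by ring, cos_sub_pi, sub_neg_eq_add, one_add_cos_add_eq hx hy]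
  field_simp

theorem tan_mul_tan_lt_one {a b : ℝ} (ha : 0 < cos a) (hb : 0 < cos b) (hab : 0 < cos (a + b)) :
    tan a * tan b < 1 := by
  rw [tan_eq_sin_div_cos, tan_eq_sin_div_cos, div_mul_div_comm, div_lt_one (by positivity)]
  rw [cos_add] at hab
  linarith

theorem abs_tan_half_le {a θ : ℝ} (ha : |a| ≤ θ) (hθ : θ < π) : |tan (a / 2)| ≤ tan (θ / 2) := by
  have hmono := strictMonoOn_tan.monotoneOn
  obtain ⟨h₁, h₂⟩ := abs_le.1 ha
  have hmem {z : ℝ} (h₁ : -θ ≤ z) (h₂ : z ≤ θ) : z / 2 ∈ Set.Ioo (-(π / 2)) (π / 2) :=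
    ⟨by linarith, by linarith⟩
  refine abs_le.2 ⟨?_, hmono (hmem h₁ h₂) (hmem (by linarith) le_rfl) (by linarith)⟩
  rw [← tan_neg, ← neg_div]
  exact hmono (hmem le_rfl (by linarith)) (hmem h₁ h₂) (by linarith)

theorem cos_half_le {a θ : ℝ} (ha : |a| ≤ θ) (hθ : θ ≤ 2 * π) : cos (θ / 2) ≤ cos (a / 2) := by
  rw [← cos_abs (a / 2)]
  exact cos_le_cos_of_nonneg_of_le_pi (abs_nonneg _) (by linarith)
    (by rw [abs_div, abs_two]; linarith)

end Real

open Real in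
theorem exists_abs_det_one_div_one_sub_cos_sub_le {θ₁ θ₂ : ℝ} (hθ₁ : 0 ≤ θ₁) (hθ₂ : 0 ≤ θ₂)
    (hsum : θ₁ + θ₂ < π) :
    ∃ C s : ℝ, 0 ≤ C ∧ 0 ≤ s ∧ s < 1 ∧ ∀ {n : ℕ} (x y : Fin n → ℝ),
      (∀ j, x j ∈ Set.Ioo (-θ₁) θ₁) → (∀ l, y l ∈ Set.Ioo (π - θ₂) (π + θ₂)) →
      |(of fun j l => 1 / (1 - cos (x j - y l))).det| ≤ n ! * C ^ n * s ^ (∑ i ∈ range n, i) := by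
  have hcos {a : ℝ} (h₀ : 0 ≤ a) (h : a < π) : 0 < cos (a / 2) :=
    cos_pos_of_mem_Ioo ⟨by linarith [pi_pos], by linarith⟩
  have hc₁ := hcos hθ₁ (by linarith)
  have hc₂ := hcos hθ₂ (by linarith)
  set s := √(tan (θ₁ / 2) * tan (θ₂ / 2))
  have hs₁ : s < 1 := (sqrt_lt' one_pos).2 <| by
    simpa using tan_mul_tan_lt_one hc₁ hc₂ (by rw [← add_div]; exact hcos (by positivity) hsum)
  refine ⟨(2 * cos (θ₁ / 2) ^ 2)⁻¹ * (cos (θ₂ / 2) ^ 2)⁻¹ * (1 / (1 - s) ^ 2), s, by positivity,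
    sqrt_nonneg _, hs₁, fun {n} x y hx hy => ?_⟩
  have hx' (j : Fin n) : |x j| ≤ θ₁ := abs_le.2 ⟨(hx j).1.le, (hx j).2.le⟩
  have hy' (l : Fin n) : |π - y l| ≤ θ₂ :=
    abs_le.2 ⟨by linarith [(hy l).2], by linarith [(hy l).1]⟩
  have hp (j : Fin n) : |(2 * cos (x j / 2) ^ 2)⁻¹| ≤ (2 * cos (θ₁ / 2) ^ 2)⁻¹ := by
    rw [abs_of_nonneg (by positivity)]
    gcongr
    exact cos_half_le (hx' j) (by linarith)
  have hq (l : Fin n) : |(cos ((π - y l) / 2) ^ 2)⁻¹| ≤ (cos (θ₂ / 2) ^ 2)⁻¹ := by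
    rw [abs_of_nonneg (by positivity)]
    gcongr
    exact cos_half_le (hy' l) (by linarith)
  have hM : (of fun j l => 1 / (1 - cos (x j - y l))) = of fun j l =>
      (2 * cos (x j / 2) ^ 2)⁻¹ * (cos ((π - y l) / 2) ^ 2)⁻¹ *
        (1 / (1 - tan (x j / 2) * tan ((π - y l) / 2)) ^ 2) := by
    ext j l
    exact one_div_one_sub_cos_sub_eq (hc₁.trans_le (cos_half_le (hx' j) (by linarith))).ne'
      (hc₂.trans_le (cos_half_le (hy' l) (by linarith))).ne'
  have hN := abs_det_one_div_one_sub_mul_sq_le (u := fun j => tan (x j / 2))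
    (w := fun l => tan ((π - y l) / 2)) (fun j => abs_tan_half_le (hx' j) (by linarith))
    (fun l => abs_tan_half_le (hy' l) (by linarith)) (by rw [sq_sqrt']; exact le_max_left _ _)
    (sqrt_nonneg _) hs₁
  rw [hM]
  refine ((abs_det_of_mul_mul_le hp hq _).trans
    (mul_le_mul_of_nonneg_left hN (by positivity))).trans_eq ?_
  rw [Fintype.card_fin]
  ring

open Real in
/-- super-exponential decay (in `n`, uniformly over configurations) of the
determinant `det[1/(1 − cos(x_j − y_l))]`. -/
theorem det_one_sub_cos_inv_superexp_decay (θ₁ θ₂ : ℝ) (hθ₁ : 0 < θ₁) (hθ₂ : 0 < θ₂)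
    (hsum : θ₁ + θ₂ < Real.pi) :
    ∃ c : ℝ, 0 < c ∧ ∀ (n : ℕ), 1 ≤ n → ∀ (x y : Fin n → ℝ),
      (∀ j, x j ∈ Set.Ioo (-θ₁) θ₁) →
      (∀ l, y l ∈ Set.Ioo (Real.pi - θ₂) (Real.pi + θ₂)) →
      |(Matrix.of fun j l : Fin n => 1 / (1 - Real.cos (x j - y l))).det| ≤
        c ^ n / Real.sqrt (n.factorial) := by
  obtain ⟨C, s, hC, hs₀, hs₁, hdet⟩ :=
    exists_abs_det_one_div_one_sub_cos_sub_le hθ₁.le hθ₂.le hsum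
  obtain ⟨c, hc, hcn⟩ := exists_pos_factorial_sq_mul_pow_le hC hs₀ hs₁
  refine ⟨c, hc, fun n _ x y hx hy => ?_⟩
  have hfact : √(n ! : ℝ) ≤ n ! := (sqrt_le_left (by positivity)).2 <| by
    have : (1 : ℝ) ≤ n ! := by exact_mod_cast n.factorial_pos
    nlinarith
  rw [le_div_iff₀ (sqrt_pos.2 (by positivity))]
  calc _ ≤ (n ! * C ^ n * s ^ (∑ i ∈ range n, i)) * (n ! : ℝ) :=
        mul_le_mul (hdet x y hx hy) hfact (sqrt_nonneg _) (by positivity)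
    _ = (n ! : ℝ) ^ 2 * C ^ n * s ^ (∑ i ∈ range n, i) := by ring
    _ ≤ c ^ n := hcn n
end
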